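/- Let h : ℝⁿ → ℝ, f : ℝⁿ → ℝⁿ, G : ℝⁿ → ℝ^{n×m}, k_d : ℝⁿ → ℝᵐ, and α : ℝ → ℝ all be C^∞, with α strictly increasing and α(0) = 0. Let D ⊆ ℝⁿ be open and suppose that for every x ∈ D, either G(x)ᵀ∇h(x) ≠ 0 or ∇h(x)·f(x) > -α(h(x)). Define a(x) = α(h(x)) + ∇h(x)·f(x) + ∇h(x)·G(x)k_d(x), b(x) = ‖G(x)ᵀ∇h(x)‖², λ_HS(a, b) = 0 if b = 0 and (-a + √(a² + b²))/(2b) if b ≠ 0, and k_HS(x) = k_d(x) + λ_HS(a(x), b(x))·G(x)ᵀ∇h(x). Then k_HS is C^∞ on D and satisfies ∇h(x)·f(x) + ∇h(x)·G(x)·k_HS(x) ≥ -α(h(x)) for all x ∈ D. -/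

import Mathlib

open scoped RealInnerProductSpace

noncomputable def adjCLM (n m : ℕ) :
    (EuclideanSpace ℝ (Fin m) →L[ℝ] EuclideanSpace ℝ (Fin n)) →L[ℝ]
    (EuclideanSpace ℝ (Fin n) →L[ℝ] EuclideanSpace ℝ (Fin m)) :=
  LinearMap.toContinuousLinearMap
  { toFun := ContinuousLinearMap.adjoint
    map_add' := fun A B => by simp
    map_smul' := fun c A => by simp }

lemma adjCLM_apply (n m : ℕ) (A : EuclideanSpace ℝ (Fin m) →L[ℝ] EuclideanSpace ℝ (Fin n)) :
    adjCLM n m A = ContinuousLinearMap.adjoint A := rfl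

/-- The half-Sontag universal-formula gain. -/
noncomputable def lamHS (a b : ℝ) : ℝ :=
  if b = 0 then 0 else (-a + Real.sqrt (a ^ 2 + b ^ 2)) / (2 * b)

lemma lamHS_eq (a b : ℝ) (hpos : 0 < a + Real.sqrt (a ^ 2 + b ^ 2)) :
    lamHS a b = b / (2 * (a + Real.sqrt (a ^ 2 + b ^ 2))) := by
  unfold lamHS
  by_cases hb : b = 0
  · simp [hb]
  · rw [if_neg hb]
    have hs : Real.sqrt (a ^ 2 + b ^ 2) ^ 2 = a ^ 2 + b ^ 2 :=
      Real.sq_sqrt (by positivity)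
    field_simp
    ring_nf
    nlinarith [hs]

/-- Euclidean form of the paper's Corollary 2: the half-Sontag universal formula yields
a smooth safety filter `k_HS` for the control-affine system `ẋ = f(x) + G(x)u` that is
`C^∞` on the open set `D` where `h` is a CBF and satisfies the barrier inequality
`⟨∇h, f⟩ + ⟨∇h, G k_HS⟩ ≥ -α(h)` there. -/
theorem stmt_11 (n m : ℕ)
    (h : EuclideanSpace ℝ (Fin n) → ℝ)
    (f : EuclideanSpace ℝ (Fin n) → EuclideanSpace ℝ (Fin n))
    (G : EuclideanSpace ℝ (Fin n) →
      (EuclideanSpace ℝ (Fin m) →L[ℝ] EuclideanSpace ℝ (Fin n)))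
    (kd : EuclideanSpace ℝ (Fin n) → EuclideanSpace ℝ (Fin m))
    (α : ℝ → ℝ)
    (hh : ContDiff ℝ (⊤ : ℕ∞) h) (hf : ContDiff ℝ (⊤ : ℕ∞) f) (hG : ContDiff ℝ (⊤ : ℕ∞) G)
    (hkd : ContDiff ℝ (⊤ : ℕ∞) kd) (hα : ContDiff ℝ (⊤ : ℕ∞) α)
    (hmono : StrictMono α) (hα0 : α 0 = 0)
    (D : Set (EuclideanSpace ℝ (Fin n))) (hD : IsOpen D)
    (hcbf : ∀ x ∈ D, ContinuousLinearMap.adjoint (G x) (gradient h x) ≠ 0 ∨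
      ⟪gradient h x, f x⟫ > -α (h x))
    (a b : EuclideanSpace ℝ (Fin n) → ℝ)
    (ha : ∀ x, a x = α (h x) + ⟪gradient h x, f x⟫ + ⟪gradient h x, G x (kd x)⟫)
    (hb : ∀ x, b x = ‖ContinuousLinearMap.adjoint (G x) (gradient h x)‖ ^ 2)
    (kHS : EuclideanSpace ℝ (Fin n) → EuclideanSpace ℝ (Fin m))
    (hkHS : ∀ x, kHS x =
      kd x + lamHS (a x) (b x) • ContinuousLinearMap.adjoint (G x) (gradient h x)) :
    ContDiffOn ℝ (⊤ : ℕ∞) kHS D ∧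
    ∀ x ∈ D, ⟪gradient h x, f x⟫ + ⟪gradient h x, G x (kHS x)⟫ ≥ -α (h x) := by
  set v : EuclideanSpace ℝ (Fin n) → EuclideanSpace ℝ (Fin m) :=
    fun x => ContinuousLinearMap.adjoint (G x) (gradient h x) with hv_def
  -- smoothness of gradient
  have hgrad : ContDiff ℝ (⊤ : ℕ∞) (gradient h) := by
    have : gradient h =
        fun x => (InnerProductSpace.toDual ℝ (EuclideanSpace ℝ (Fin n))).symm (fderiv ℝ h x) :=
      rfl
    rw [this]
    exact (InnerProductSpace.toDual ℝ _).symm.contDiff.comp (hh.fderiv_right (by simp))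
  have hv : ContDiff ℝ (⊤ : ℕ∞) v := by
    have hA : ContDiff ℝ (⊤ : ℕ∞) (fun x => adjCLM n m (G x)) := (adjCLM n m).contDiff.comp hG
    exact hA.clm_apply hgrad
  -- b x = ‖v x‖ ^ 2, positivity facts on D
  have key : ∀ x ∈ D, b x ≠ 0 ∨ (b x = 0 ∧ 0 < a x) := by
    intro x hx
    by_cases hbx : b x = 0
    · right
      refine ⟨hbx, ?_⟩
      have hv0 : v x = 0 := by
        have := hb x
        rw [hbx] at this
        have := (pow_eq_zero_iff (n := 2) (by norm_num)).mp this.symm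
        simpa [hv_def] using norm_eq_zero.mp this
      rcases hcbf x hx with hc | hc
      · exact absurd hv0 hc
      · have hGkd : ⟪gradient h x, G x (kd x)⟫ = 0 := by
          have : ⟪gradient h x, G x (kd x)⟫ = ⟪v x, kd x⟫ :=
            (ContinuousLinearMap.adjoint_inner_left (G x) (kd x) (gradient h x)).symm
          rw [this, hv0, inner_zero_left]
        rw [ha x, hGkd]
        linarith
    · exact Or.inl hbx
  have hpos : ∀ x ∈ D, 0 < a x + Real.sqrt (a x ^ 2 + b x ^ 2) := by
    intro x hx
    rcases key x hx with hbx | ⟨hbx, hax⟩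
    · have : |a x| < Real.sqrt (a x ^ 2 + b x ^ 2) := by
        rw [show |a x| = Real.sqrt (a x ^ 2) by rw [Real.sqrt_sq_eq_abs]]
        exact Real.sqrt_lt_sqrt (by positivity) (by nlinarith [sq_pos_of_ne_zero hbx])
      have := neg_abs_le (a x)
      linarith
    · have : 0 ≤ Real.sqrt (a x ^ 2 + b x ^ 2) := Real.sqrt_nonneg _
      linarith
  -- smoothness of a, b
  have ha' : ContDiff ℝ (⊤ : ℕ∞) a := by
    have : a = fun x => α (h x) + ⟪gradient h x, f x⟫ + ⟪gradient h x, G x (kd x)⟫ :=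
      funext ha
    rw [this]
    refine ContDiff.add (ContDiff.add (hα.comp hh) (hgrad.inner ℝ hf)) ?_
    exact hgrad.inner ℝ ((hG.clm_apply hkd))
  have hb' : ContDiff ℝ (⊤ : ℕ∞) b := by
    have : b = fun x => ‖v x‖ ^ 2 := funext hb
    rw [this]
    have : (fun x => ‖v x‖ ^ 2) = fun x => ⟪v x, v x⟫ := by
      funext x; rw [real_inner_self_eq_norm_sq]
    rw [this]
    exact hv.inner ℝ hv
  -- smoothness of lam ∘ (a, b) on D
  have hlam : ContDiffOn ℝ (⊤ : ℕ∞) (fun x => lamHS (a x) (b x)) D := by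
    have heq : Set.EqOn (fun x => lamHS (a x) (b x))
        (fun x => b x / (2 * (a x + Real.sqrt (a x ^ 2 + b x ^ 2)))) D := by
      intro x hx
      exact lamHS_eq _ _ (hpos x hx)
    refine ContDiffOn.congr ?_ heq
    intro x hx
    have hsq : 0 < a x ^ 2 + b x ^ 2 := by
      rcases key x hx with hbx | ⟨_, hax⟩
      · positivity
      · positivity
    have hsqrt : ContDiffAt ℝ (⊤ : ℕ∞) (fun x => Real.sqrt (a x ^ 2 + b x ^ 2)) x := by
      have harg : ContDiffAt ℝ (⊤ : ℕ∞) (fun x => a x ^ 2 + b x ^ 2) x :=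
        (((ha'.pow 2).add (hb'.pow 2))).contDiffAt
      exact (Real.contDiffAt_sqrt (ne_of_gt hsq)).comp x harg
    have hden : ContDiffAt ℝ (⊤ : ℕ∞) (fun x => 2 * (a x + Real.sqrt (a x ^ 2 + b x ^ 2))) x :=
      (contDiffAt_const.mul ((ha'.contDiffAt).add hsqrt))
    have := (hb'.contDiffAt.div hden (ne_of_gt (by have h0 := hpos x hx; linarith)))
    exact this.contDiffWithinAt
  constructor
  · -- kHS smooth on D
    have : Set.EqOn kHS (fun x => kd x + lamHS (a x) (b x) • v x) D := fun x _ => hkHS x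
    refine ContDiffOn.congr ?_ this
    exact (hkd.contDiffOn).add (hlam.smul (hv.contDiffOn))
  · intro x hx
    have hGv : ⟪gradient h x, G x (v x)⟫ = b x := by
      rw [hb x, ← ContinuousLinearMap.adjoint_inner_left (G x) (v x) (gradient h x)]
      simp only [hv_def]
      exact real_inner_self_eq_norm_sq _
    have hexp : ⟪gradient h x, G x (kHS x)⟫ =
        ⟪gradient h x, G x (kd x)⟫ + lamHS (a x) (b x) * b x := by
      rw [hkHS x, map_add, inner_add_right, map_smul, inner_smul_right]
      rw [show (ContinuousLinearMap.adjoint (G x)) (gradient h x) = v x from rfl, hGv]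
    rw [hexp]
    have hgoal : 0 ≤ a x + lamHS (a x) (b x) * b x := by
      rcases key x hx with hbx | ⟨hbx, hax⟩
      · unfold lamHS
        rw [if_neg hbx]
        have hs : |a x| ≤ Real.sqrt (a x ^ 2 + b x ^ 2) := by
          rw [show |a x| = Real.sqrt (a x ^ 2) by rw [Real.sqrt_sq_eq_abs]]
          exact Real.sqrt_le_sqrt (le_add_of_nonneg_right (sq_nonneg _))
        have h2 : -a x ≤ Real.sqrt (a x ^ 2 + b x ^ 2) := (neg_le_abs _).trans hs
        have : (-a x + Real.sqrt (a x ^ 2 + b x ^ 2)) / (2 * b x) * b x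
            = (-a x + Real.sqrt (a x ^ 2 + b x ^ 2)) / 2 := by
          field_simp
        rw [this]
        linarith
      · simp [lamHS, hbx]
        linarith
    have := ha x
    linarith [hgoal, this.symm.le]
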